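/- (Lemma 2, solution-space characterization) Fix N ≥ 2 and subsets E, A ⊆ P. If the kernel of the extended linear map T_{E,A} has dimension |E ∩ A|, then that kernel is exactly the set of triples (0, v, v) where v : P → ℝ is supported on E ∩ A. -/

import Mathlib

abbrev Pair (N : ℕ) := {p : Fin N × Fin N // p.2 < p.1}

def Dmap {N : ℕ} (δ : Fin N → ℝ) : Pair N → ℝ := fun p => δ p.1.1 - δ p.1.2

def ind {N : ℕ} (a : Pair N) : Pair N → ℝ := fun p => if p = a then 1 else 0

def IsSolution {N : ℕ} (hN : 0 < N) (E : Set (Pair N)) (b : Pair N → ℝ)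
    (dh : Fin N → ℝ) (eh : Pair N → ℝ) : Prop :=
  dh ⟨0, hN⟩ = 0 ∧ (∀ p ∉ E, eh p = 0) ∧ ∀ p, Dmap dh p + eh p = b p

/-- The ambient linear map `(dh, eh, e') ↦ D dh + eh - e'`. -/
def Lfull (N : ℕ) : ((Fin N → ℝ) × (Pair N → ℝ) × (Pair N → ℝ)) →ₗ[ℝ] (Pair N → ℝ) where
  toFun x := fun p => (x.1 p.1.1 - x.1 p.1.2) + x.2.1 p - x.2.2 p
  map_add' x y := by funext p; simp; ring
  map_smul' c x := by funext p; simp; ring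

/-- The domain of the extended (re-vectorized) map: triples `(dh, eh, e')` with
`dh 0 = 0`, `eh` supported on `E`, `e'` supported on `A`. -/
noncomputable def Dom {N : ℕ} (hN : 0 < N) (E A : Set (Pair N)) :
    Submodule ℝ ((Fin N → ℝ) × (Pair N → ℝ) × (Pair N → ℝ)) where
  carrier := {x | x.1 ⟨0, hN⟩ = 0 ∧ (∀ p ∉ E, x.2.1 p = 0) ∧ (∀ p ∉ A, x.2.2 p = 0)}
  add_mem' := by
    rintro a b ⟨ha0, ha1, ha2⟩ ⟨hb0, hb1, hb2⟩
    refine ⟨by simp [ha0, hb0], fun p hp => by simp [ha1 p hp, hb1 p hp],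
      fun p hp => by simp [ha2 p hp, hb2 p hp]⟩
  zero_mem' := ⟨rfl, fun p _ => rfl, fun p _ => rfl⟩
  smul_mem' := by
    rintro c a ⟨ha0, ha1, ha2⟩
    refine ⟨by simp [ha0], fun p hp => by simp [ha1 p hp], fun p hp => by simp [ha2 p hp]⟩

/-- The extended (re-vectorized) linear map `T_{E,A} (dh, eh, e') = D dh + eh - e'`. -/
noncomputable def Tmap {N : ℕ} (hN : 0 < N) (E A : Set (Pair N)) :
    Dom hN E A →ₗ[ℝ] (Pair N → ℝ) := (Lfull N).comp (Dom hN E A).subtype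


/-!
Every triple `(0, v, v)` with `v` supported on `E ∩ A` lies in the kernel of `T_{E,A}`, and
these triples form a subspace isomorphic to `ℝ^(E ∩ A)`, hence of dimension `|E ∩ A|`.
A subspace of a finite-dimensional space with the same dimension is the whole space.
-/

open Module Function

lemma extend_val_domRestrict_eq_self {α M : Type*} [Zero M] {s : Set α} {v : α → M}
    (hv : ∀ p ∉ s, v p = 0) : extend Subtype.val (s.domRestrict v) 0 = v := by
  funext p
  by_cases hp : p ∈ s
  · exact extend_val_apply hp
  · rw [extend_val_apply' hp, hv p hp, Pi.zero_apply]

namespace Dom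

variable {N : ℕ} (hN : 0 < N) (E A : Set (Pair N))

noncomputable def diagOfInter : ((E ∩ A : Set (Pair N)) → ℝ) →ₗ[ℝ] Dom hN E A :=
  LinearMap.codRestrict (Dom hN E A)
    ((LinearMap.prod 0 (LinearMap.prod LinearMap.id LinearMap.id)).comp
      (ExtendByZero.linearMap ℝ Subtype.val))
    fun _ => ⟨rfl, fun _ hp => extend_val_apply' fun h => hp h.1,
      fun _ hp => extend_val_apply' fun h => hp h.2⟩

@[simp]
lemma coe_diagOfInter_apply (w : (E ∩ A : Set (Pair N)) → ℝ) :
    (diagOfInter hN E A w : (Fin N → ℝ) × (Pair N → ℝ) × (Pair N → ℝ)) =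
      (0, extend Subtype.val w 0, extend Subtype.val w 0) :=
  rfl

lemma diagOfInter_injective : Injective (diagOfInter hN E A) := fun _ _ h =>
  extend_injective Subtype.val_injective (0 : Pair N → ℝ)
    (congrArg (fun x : Dom hN E A => x.1.2.1) h)

lemma finrank_range_diagOfInter :
    finrank ℝ (LinearMap.range (diagOfInter hN E A)) = (E ∩ A).ncard := by
  classical
  rw [LinearMap.finrank_range_of_inj (diagOfInter_injective hN E A), finrank_fintype_fun_eq_card,
    ← Nat.card_eq_fintype_card, Nat.card_coe_set_eq]

lemma range_diagOfInter_le_ker :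
    LinearMap.range (diagOfInter hN E A) ≤ LinearMap.ker (Tmap hN E A) := by
  rintro _ ⟨w, rfl⟩
  ext p
  simp [Tmap, Lfull]

lemma mem_range_diagOfInter_iff (x : Dom hN E A) :
    x ∈ LinearMap.range (diagOfInter hN E A) ↔
      ∃ v : Pair N → ℝ, (∀ p ∉ E ∩ A, v p = 0) ∧
        (x : (Fin N → ℝ) × (Pair N → ℝ) × (Pair N → ℝ)) = (0, v, v) := by
  constructor
  · rintro ⟨w, rfl⟩
    exact ⟨extend Subtype.val w 0, fun _ hp => extend_val_apply' hp, rfl⟩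
  · rintro ⟨v, hv, hx⟩
    refine ⟨(E ∩ A).domRestrict v, Subtype.ext ?_⟩
    rw [coe_diagOfInter_apply, extend_val_domRestrict_eq_self hv, hx]

end Dom

/-- Lemma 2 (solution-space characterization): if the kernel of the extended linear map
`T_{E,A}` has dimension `|E ∩ A|`, then that kernel is exactly the set of triples
`(0, v, v)` where `v` is supported on `E ∩ A`. -/
theorem stmt_10 {N : ℕ} (hN : 2 ≤ N) (E A : Set (Pair N))
    (hker : Module.finrank ℝ
        (LinearMap.ker (Tmap (show 0 < N by omega) E A)) = (E ∩ A).ncard) :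
    ∀ x : Dom (show 0 < N by omega) E A,
      x ∈ LinearMap.ker (Tmap (show 0 < N by omega) E A) ↔
        ∃ v : Pair N → ℝ, (∀ p ∉ E ∩ A, v p = 0) ∧
          (x : (Fin N → ℝ) × (Pair N → ℝ) × (Pair N → ℝ)) = (0, v, v) := by
  have hN0 : 0 < N := by omega
  have hrange : LinearMap.range (Dom.diagOfInter hN0 E A) = LinearMap.ker (Tmap hN0 E A) :=
    Submodule.eq_of_le_of_finrank_eq (Dom.range_diagOfInter_le_ker hN0 E A)
      (by rw [Dom.finrank_range_diagOfInter, hker])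
  intro x
  rw [← hrange, Dom.mem_range_diagOfInter_iff]
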